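/- In the plane ℝ² with the ℓ¹-norm, for x = (1,0) and y = (0,1), the sum of the three inner angles of the triangle with vertices 0, x, y is strictly less than π: ∠Thy(x,y) + ∠Thy(−x, y−x) + ∠Thy(−y, x−y) = π/2 + 2·arccos(3/4) < π. -/

import Mathlib

noncomputable def N1 : ℝ × ℝ → ℝ := fun v => |v.1| + |v.2|

noncomputable def angThy1 (u v : ℝ × ℝ) : ℝ :=
  Real.arccos ((1/4) *
    ((N1 ((N1 u)⁻¹ • u + (N1 v)⁻¹ • v)) ^ 2 - (N1 ((N1 u)⁻¹ • u - (N1 v)⁻¹ • v)) ^ 2))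

/-! The angle only depends on the rays through `u` and `v` and is invariant under swapping
coordinates, so the two base angles coincide; evaluating on unit vectors gives a right angle at `0`
and base angles of cosine `3/4 > cos (π/4)`, hence each below `π/4`. -/

lemma N1_swap (v : ℝ × ℝ) : N1 v.swap = N1 v := add_comm _ _

lemma N1_smul (c : ℝ) (v : ℝ × ℝ) : N1 (c • v) = |c| * N1 v := by
  simp only [N1, Prod.smul_fst, Prod.smul_snd, smul_eq_mul, abs_mul, mul_add]

lemma angThy1_swap (u v : ℝ × ℝ) : angThy1 u.swap v.swap = angThy1 u v := by
  rw [angThy1, angThy1, N1_swap, N1_swap, ← N1_swap ((N1 u)⁻¹ • u + (N1 v)⁻¹ • v),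
    ← N1_swap ((N1 u)⁻¹ • u - (N1 v)⁻¹ • v)]
  rfl

lemma angThy1_smul_right (u : ℝ × ℝ) {c : ℝ} (hc : 0 < c) (v : ℝ × ℝ) :
    angThy1 u (c • v) = angThy1 u v := by
  rw [angThy1, angThy1, N1_smul, abs_of_pos hc, mul_inv_rev, smul_smul, mul_assoc,
    inv_mul_cancel₀ hc.ne', mul_one]

lemma angThy1_of_N1_eq_one {u v : ℝ × ℝ} (hu : N1 u = 1) (hv : N1 v = 1) :
    angThy1 u v = Real.arccos ((N1 (u + v) ^ 2 - N1 (u - v) ^ 2) / 4) := by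
  rw [angThy1, hu, hv, inv_one, one_smul, one_smul, one_div, inv_mul_eq_div]

lemma angThy1_basis : angThy1 (1, 0) (0, 1) = Real.pi / 2 := by
  rw [angThy1_of_N1_eq_one (by norm_num [N1]) (by norm_num [N1])]
  norm_num [N1]

lemma angThy1_at_vertex : angThy1 (-(1, 0)) ((0, 1) - (1, 0)) = Real.arccos (3 / 4) := by
  have hv : (0, 1) - (1, 0) = (2 : ℝ) • ((-1 / 2, 1 / 2) : ℝ × ℝ) := by norm_num
  rw [hv, angThy1_smul_right _ two_pos,
    angThy1_of_N1_eq_one (by norm_num [N1]) (by norm_num [N1])]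
  norm_num [N1]

lemma arccos_three_quarters_lt_pi_div_four : Real.arccos (3 / 4) < Real.pi / 4 := by
  have hcos : Real.cos (Real.pi / 4) < 3 / 4 := by
    rw [Real.cos_pi_div_four]
    nlinarith [Real.sq_sqrt (by norm_num : (0 : ℝ) ≤ 2), Real.sqrt_nonneg 2]
  calc Real.arccos (3 / 4) < Real.arccos (Real.cos (Real.pi / 4)) :=
        Real.arccos_lt_arccos (Real.neg_one_le_cos _) hcos (by norm_num)
    _ = Real.pi / 4 := Real.arccos_cos (by positivity) (by linarith [Real.pi_pos])

theorem stmt_9 :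
    angThy1 (1, 0) (0, 1) + angThy1 (-(1, 0)) ((0, 1) - (1, 0)) +
        angThy1 (-(0, 1)) ((1, 0) - (0, 1)) =
      Real.pi / 2 + 2 * Real.arccos (3/4) ∧
    Real.pi / 2 + 2 * Real.arccos (3/4) < Real.pi := by
  have hsymm : angThy1 (-(0, 1)) ((1, 0) - (0, 1)) = angThy1 (-(1, 0)) ((0, 1) - (1, 0)) := by
    rw [← angThy1_swap]
    simp only [Prod.swap_neg, Prod.swap_sub, Prod.swap_prod_mk]
  refine ⟨?_, ?_⟩
  · rw [hsymm, angThy1_basis, angThy1_at_vertex]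
    ring
  · linarith [arccos_three_quarters_lt_pi_div_four]
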